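/- arXiv:2007.06970 — 2 statements merged into one kernel-verified Lean document; each statement's English description precedes it below -/
import Mathlib

section
/- Let 𝐗 = (X,𝕏) and 𝐘 = (Y,𝕐) be p-rough paths controlled by ω on [0,T], and suppose there are constants C ≥ 0 and θ > 1 with |X_{st} − Y_{st}| ≤ C ω(s,t)^θ and |𝕏_{st} − 𝕐_{st}| ≤ C ω(s,t)^θ for all 0 ≤ s ≤ t ≤ T. Then X_{st} = Y_{st} for all 0 ≤ s ≤ t ≤ T and 𝕏 = 𝕐. -/
/-!
A function `Δ ≥ 0` that is subadditive on `[0,T]` and bounded by `C ω(s,t)^θ` with `θ > 1`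
vanishes: splitting `[s,t]` at a point `u` with `ω(s,u) = ω(u,t) ≤ ω(s,t)/2` improves the
bound by the factor `2^{1-θ} < 1`, and iterating drives it to `0`. The increment differences
`X_{st} - Y_{st}` are additive, so they vanish; then Chen's identity makes `𝕏 - 𝕐` additive
as well, so it vanishes too.
-/

open Filter Topology Set

noncomputable section

/-- `ω` is a control on `[0,T]`: continuous on the simplex, vanishing on the diagonal,
superadditive and nonnegative. -/
def IsControl (T : ℝ) (ω : ℝ → ℝ → ℝ) : Prop :=
  ContinuousOn (fun q : ℝ × ℝ => ω q.1 q.2) {q : ℝ × ℝ | 0 ≤ q.1 ∧ q.1 ≤ q.2 ∧ q.2 ≤ T} ∧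
    (∀ t : ℝ, 0 ≤ t → t ≤ T → ω t t = 0) ∧
    (∀ s u t : ℝ, 0 ≤ s → s ≤ u → u ≤ t → t ≤ T → ω s u + ω u t ≤ ω s t) ∧
    (∀ s t : ℝ, 0 ≤ s → s ≤ t → t ≤ T → 0 ≤ ω s t)

/-- Membership in `C^{1/r}_ω([0,T],V)`: continuity on `[0,T]` together with the increment
bound `‖Y_t − Y_s‖ ≤ C ω(s,t)^r`. -/
def HolderPath (T r : ℝ) (ω : ℝ → ℝ → ℝ) {V : Type*} [NormedAddCommGroup V]
    (Y : ℝ → V) : Prop :=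
  ContinuousOn Y (Set.Icc 0 T) ∧
    ∃ C : ℝ, ∀ s t : ℝ, 0 ≤ s → s ≤ t → t ≤ T → ‖Y t - Y s‖ ≤ C * ω s t ^ r

/-- `(X, XX)` is a `p`-rough path controlled by `ω` on `[0,T]`. -/
def IsRoughPath (T p : ℝ) (ω : ℝ → ℝ → ℝ) {d : ℕ}
    (X : ℝ → Fin d → ℝ) (XX : ℝ → ℝ → Fin d → Fin d → ℝ) : Prop :=
  HolderPath T (1 / p) ω X ∧
    ContinuousOn (fun q : ℝ × ℝ => XX q.1 q.2) {q : ℝ × ℝ | 0 ≤ q.1 ∧ q.1 ≤ q.2 ∧ q.2 ≤ T} ∧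
    (∃ C : ℝ, ∀ s t : ℝ, 0 ≤ s → s ≤ t → t ≤ T → ‖XX s t‖ ≤ C * ω s t ^ (2 / p)) ∧
    (∀ s u t : ℝ, 0 ≤ s → s ≤ u → u ≤ t → t ≤ T → ∀ α β : Fin d,
      XX s t α β = XX s u α β + (X u α - X s α) * (X t β - X u β) + XX u t α β)

/-- `(H, H')` is an `X`-controlled path with values in `V`; `H' t γ` is the Gubinelli
derivative at time `t` in the direction of the `γ`-th coordinate. -/
def IsControlledPath (T p : ℝ) (ω : ℝ → ℝ → ℝ) {d : ℕ} (X : ℝ → Fin d → ℝ)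
    {V : Type*} [NormedAddCommGroup V] [NormedSpace ℝ V]
    (H : ℝ → V) (H' : ℝ → Fin d → V) : Prop :=
  HolderPath T (1 / p) ω H ∧ HolderPath T (1 / p) ω H' ∧
    ∃ C : ℝ, ∀ s t : ℝ, 0 ≤ s → s ≤ t → t ≤ T →
      ‖H t - H s - ∑ γ, (X t γ - X s γ) • H' s γ‖ ≤ C * ω s t ^ (2 / p)

/-- The bracket `[𝐗]` of the rough path `(X, XX)`. -/
def bracket {d : ℕ} (X : ℝ → Fin d → ℝ) (XX : ℝ → ℝ → Fin d → Fin d → ℝ)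
    (s t : ℝ) (α β : Fin d) : ℝ :=
  (X t α - X s α) * (X t β - X s β) - (XX s t α β + XX s t β α)

/-- A partition of `[s,t]` into `n` consecutive intervals. -/
structure IntervalPartition (s t : ℝ) where
  n : ℕ
  pts : ℕ → ℝ
  mono : Monotone pts
  first : pts 0 = s
  last : pts n = t

/-- The mesh of a partition. -/
def IntervalPartition.mesh {s t : ℝ} (π : IntervalPartition s t) : ℝ :=
  ⨆ i : Fin π.n, (π.pts (i.1 + 1) - π.pts i.1)

/-- The Riemann sum of a two-parameter summand along a partition. -/
def riemannSum {s t : ℝ} {V : Type*} [AddCommMonoid V]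
    (π : IntervalPartition s t) (f : ℝ → ℝ → V) : V :=
  ∑ i ∈ Finset.range π.n, f (π.pts i) (π.pts (i + 1))

/-- `L` is the limit of the Riemann sums of `f` along every sequence of partitions of `[s,t]`
with mesh tending to `0`. -/
def RSumLimit {V : Type*} [AddCommMonoid V] [TopologicalSpace V] (s t : ℝ)
    (f : ℝ → ℝ → V) (L : V) : Prop :=
  ∀ π : ℕ → IntervalPartition s t,
    Tendsto (fun n => (π n).mesh) atTop (𝓝 0) →
      Tendsto (fun n => riemannSum (π n) f) atTop (𝓝 L)

/-- The compensated Riemann summand `H_u X_{uv} + H'_u 𝕏_{uv}` of a controlled integrand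
against a rough path. -/
def roughSummand {d e : ℕ} (X : ℝ → Fin d → ℝ) (XX : ℝ → ℝ → Fin d → Fin d → ℝ)
    (H : ℝ → Fin e → Fin d → ℝ) (H' : ℝ → Fin d → Fin e → Fin d → ℝ) :
    ℝ → ℝ → Fin e → ℝ :=
  fun u v k => (∑ γ, H u k γ * (X v γ - X u γ)) + ∑ α, ∑ β, H' u α k β * XX u v α β

/-- The partial derivative `∂_α f^i (x)`. -/
def pderiv {m n : ℕ} (f : (Fin m → ℝ) → (Fin n → ℝ)) (x : Fin m → ℝ)
    (α : Fin m) (i : Fin n) : ℝ :=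
  fderiv ℝ f x (Pi.single α 1) i

/-- The second partial derivative `∂_{αβ} f^k (x)`. -/
def pderiv2 {m n : ℕ} (f : (Fin m → ℝ) → (Fin n → ℝ)) (x : Fin m → ℝ)
    (α β : Fin m) (k : Fin n) : ℝ :=
  fderiv ℝ (fun y => fderiv ℝ f y (Pi.single β 1) k) x (Pi.single α 1)


namespace IsControl

variable {T : ℝ} {ω : ℝ → ℝ → ℝ}

theorem exists_split_rpow_le (hω : IsControl T ω) {s t : ℝ} (hs : 0 ≤ s) (hst : s ≤ t)
    (ht : t ≤ T) {θ : ℝ} (hθ : 0 ≤ θ) :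
    ∃ u ∈ Icc s t, ω s u ^ θ + ω u t ^ θ ≤ (2 : ℝ) ^ (1 - θ) * ω s t ^ θ := by
  obtain ⟨hcont, hdiag, hsuper, hnonneg⟩ := hω
  have hcont_diff : ContinuousOn (fun u => ω s u - ω u t) (Icc s t) :=
    (hcont.comp (f := fun u => (s, u)) (by fun_prop) fun _ hu => ⟨hs, hu.1, hu.2.trans ht⟩).sub
      (hcont.comp (f := fun u => (u, t)) (by fun_prop) fun _ hu => ⟨hs.trans hu.1, hu.2, ht⟩)
  have hωst := hnonneg s t hs hst ht
  have hzero : (0 : ℝ) ∈ Icc (ω s s - ω s t) (ω s t - ω t t) := by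
    rw [hdiag s hs (hst.trans ht), hdiag t (hs.trans hst) ht]
    constructor <;> linarith
  obtain ⟨u, ⟨hsu, hut⟩, hdiff⟩ := intermediate_value_Icc hst hcont_diff hzero
  have hmid : ω u t = ω s u := by linarith [show ω s u - ω u t = 0 from hdiff]
  have ha := hnonneg s u hs hsu (hut.trans ht)
  have hsplit : 2 * ω s u ≤ ω s t := by
    linarith [hsuper s u t hs hsu hut ht]
  refine ⟨u, ⟨hsu, hut⟩, ?_⟩
  calc ω s u ^ θ + ω u t ^ θ = (2 : ℝ) ^ (1 - θ) * (2 * ω s u) ^ θ := by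
        rw [hmid, Real.mul_rpow zero_le_two ha, ← mul_assoc, ← Real.rpow_add zero_lt_two,
          sub_add_cancel, Real.rpow_one, two_mul]
    _ ≤ (2 : ℝ) ^ (1 - θ) * ω s t ^ θ := by gcongr

variable {Δ : ℝ → ℝ → ℝ} {C θ : ℝ}

theorem le_mul_pow_of_subadditive (hω : IsControl T ω)
    (hsub : ∀ s u t, 0 ≤ s → s ≤ u → u ≤ t → t ≤ T → Δ s t ≤ Δ s u + Δ u t)
    (hC : 0 ≤ C) (hθ : 0 ≤ θ)
    (hbound : ∀ s t, 0 ≤ s → s ≤ t → t ≤ T → Δ s t ≤ C * ω s t ^ θ) (n : ℕ) :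
    ∀ s t, 0 ≤ s → s ≤ t → t ≤ T → Δ s t ≤ C * ((2 : ℝ) ^ (1 - θ)) ^ n * ω s t ^ θ := by
  induction n with
  | zero => simpa using hbound
  | succ n ih =>
    intro s t hs hst ht
    obtain ⟨u, ⟨hsu, hut⟩, hsplit⟩ := hω.exists_split_rpow_le hs hst ht hθ
    have hCn : 0 ≤ C * ((2 : ℝ) ^ (1 - θ)) ^ n := by positivity
    calc Δ s t ≤ Δ s u + Δ u t := hsub s u t hs hsu hut ht
      _ ≤ C * ((2 : ℝ) ^ (1 - θ)) ^ n * (ω s u ^ θ + ω u t ^ θ) := by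
          rw [mul_add]
          exact add_le_add (ih s u hs hsu (hut.trans ht)) (ih u t (hs.trans hsu) hut ht)
      _ ≤ C * ((2 : ℝ) ^ (1 - θ)) ^ n * ((2 : ℝ) ^ (1 - θ) * ω s t ^ θ) := by gcongr
      _ = C * ((2 : ℝ) ^ (1 - θ)) ^ (n + 1) * ω s t ^ θ := by ring

theorem eq_zero_of_subadditive_of_le_rpow (hω : IsControl T ω)
    (hnonneg : ∀ s t, 0 ≤ s → s ≤ t → t ≤ T → 0 ≤ Δ s t)
    (hsub : ∀ s u t, 0 ≤ s → s ≤ u → u ≤ t → t ≤ T → Δ s t ≤ Δ s u + Δ u t)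
    (hC : 0 ≤ C) (hθ : 1 < θ)
    (hbound : ∀ s t, 0 ≤ s → s ≤ t → t ≤ T → Δ s t ≤ C * ω s t ^ θ)
    {s t : ℝ} (hs : 0 ≤ s) (hst : s ≤ t) (ht : t ≤ T) : Δ s t = 0 := by
  have hratio : (2 : ℝ) ^ (1 - θ) < 1 :=
    Real.rpow_lt_one_of_one_lt_of_neg one_lt_two (by linarith)
  have hlim :
      Tendsto (fun n : ℕ => C * ((2 : ℝ) ^ (1 - θ)) ^ n * ω s t ^ θ) atTop (𝓝 0) := by
    simpa using ((tendsto_pow_atTop_nhds_zero_of_lt_one (by positivity) hratio).const_mul C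
      ).mul_const (ω s t ^ θ)
  refine le_antisymm (ge_of_tendsto' hlim fun n => ?_) (hnonneg s t hs hst ht)
  exact hω.le_mul_pow_of_subadditive hsub hC (zero_le_one.trans hθ.le) hbound n s t hs hst ht

theorem eq_zero_of_additive_of_norm_le_rpow {E : Type*} [NormedAddCommGroup E]
    (hω : IsControl T ω) {D : ℝ → ℝ → E}
    (hadd : ∀ s u t, 0 ≤ s → s ≤ u → u ≤ t → t ≤ T → D s t = D s u + D u t)
    (hC : 0 ≤ C) (hθ : 1 < θ)
    (hbound : ∀ s t, 0 ≤ s → s ≤ t → t ≤ T → ‖D s t‖ ≤ C * ω s t ^ θ)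
    {s t : ℝ} (hs : 0 ≤ s) (hst : s ≤ t) (ht : t ≤ T) : D s t = 0 :=
  norm_eq_zero.mp <| hω.eq_zero_of_subadditive_of_le_rpow (fun _ _ _ _ _ => norm_nonneg _)
    (fun s u t hs hsu hut ht => hadd s u t hs hsu hut ht ▸ norm_add_le _ _)
    hC hθ hbound hs hst ht

end IsControl

theorem statement2_general (T p : ℝ) (d : ℕ)
    (ω : ℝ → ℝ → ℝ) (hω : IsControl T ω)
    (X Y : ℝ → Fin d → ℝ) (XX YY : ℝ → ℝ → Fin d → Fin d → ℝ)
    (hX : IsRoughPath T p ω X XX) (hY : IsRoughPath T p ω Y YY)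
    (C θ : ℝ) (hC : 0 ≤ C) (hθ : 1 < θ)
    (h1 : ∀ s t : ℝ, 0 ≤ s → s ≤ t → t ≤ T →
      ‖(X t - X s) - (Y t - Y s)‖ ≤ C * ω s t ^ θ)
    (h2 : ∀ s t : ℝ, 0 ≤ s → s ≤ t → t ≤ T →
      ‖(fun (α β : Fin d) => XX s t α β - YY s t α β)‖ ≤ C * ω s t ^ θ) :
    (∀ s t : ℝ, 0 ≤ s → s ≤ t → t ≤ T → X t - X s = Y t - Y s) ∧
    (∀ s t : ℝ, 0 ≤ s → s ≤ t → t ≤ T → XX s t = YY s t) := by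
  have hinc : ∀ s t : ℝ, 0 ≤ s → s ≤ t → t ≤ T → X t - X s = Y t - Y s :=
    fun s t hs hst ht => sub_eq_zero.mp <|
      hω.eq_zero_of_additive_of_norm_le_rpow (fun _ _ _ _ _ _ _ => by abel) hC hθ h1 hs hst ht
  refine ⟨hinc, fun s t hs hst ht => ?_⟩
  have hchen : ∀ s u t, 0 ≤ s → s ≤ u → u ≤ t → t ≤ T →
      (fun (α β : Fin d) => XX s t α β - YY s t α β) =
        (fun α β => XX s u α β - YY s u α β) + fun α β => XX u t α β - YY u t α β := by
    intro s u t hs hsu hut ht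
    funext α β
    have hsu_inc := congrFun (hinc s u hs hsu (hut.trans ht)) α
    have hut_inc := congrFun (hinc u t (hs.trans hsu) hut ht) β
    simp only [Pi.sub_apply] at hsu_inc hut_inc
    rw [Pi.add_apply, Pi.add_apply, hX.2.2.2 s u t hs hsu hut ht, hY.2.2.2 s u t hs hsu hut ht,
      hsu_inc, hut_inc]
    ring
  funext α β
  have hzero := hω.eq_zero_of_additive_of_norm_le_rpow hchen hC hθ h2 hs hst ht
  exact sub_eq_zero.mp (congrFun (congrFun hzero α) β)

/-- Two rough paths whose traces and second order parts differ by
`O(ω(s,t)^θ)` with `θ > 1` have identical increments and second order parts. -/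
theorem statement2 (T p : ℝ) (hT : 0 ≤ T) (hp1 : 1 ≤ p) (hp3 : p < 3) (d : ℕ)
    (ω : ℝ → ℝ → ℝ) (hω : IsControl T ω)
    (X Y : ℝ → Fin d → ℝ) (XX YY : ℝ → ℝ → Fin d → Fin d → ℝ)
    (hX : IsRoughPath T p ω X XX) (hY : IsRoughPath T p ω Y YY)
    (C θ : ℝ) (hC : 0 ≤ C) (hθ : 1 < θ)
    (h1 : ∀ s t : ℝ, 0 ≤ s → s ≤ t → t ≤ T →
      ‖(X t - X s) - (Y t - Y s)‖ ≤ C * ω s t ^ θ)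
    (h2 : ∀ s t : ℝ, 0 ≤ s → s ≤ t → t ≤ T →
      ‖(fun (α β : Fin d) => XX s t α β - YY s t α β)‖ ≤ C * ω s t ^ θ) :
    (∀ s t : ℝ, 0 ≤ s → s ≤ t → t ≤ T → X t - X s = Y t - Y s) ∧
    (∀ s t : ℝ, 0 ≤ s → s ≤ t → t ≤ T → XX s t = YY s t) :=
  statement2_general T p d ω hω X Y XX YY hX hY C θ hC hθ h1 h2
end
end

section
/- Let ω be a control on [0,T] and Ξ : Δ_T → ℝ^e a function for which there are constants C ≥ 0 and θ > 1 with |Ξ_{st} − Ξ_{su} − Ξ_{ut}| ≤ C ω(s,t)^θ for all 0 ≤ s ≤ u ≤ t ≤ T. Then there exists a unique function I : Δ_T → ℝ^e such that I_{st} = I_{su} + I_{ut} for all 0 ≤ s ≤ u ≤ t ≤ T and |I_{st} − Ξ_{st}| ≤ C' ω(s,t)^θ for some constant C'. Moreover, for every 0 ≤ s ≤ t ≤ T and every sequence (π_n) of partitions of [s,t] with mesh tending to 0, I_{st} = lim_{n→∞} Σ_{[u,v]∈π_n} Ξ_{uv}. -/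
open Filter Topology Set

noncomputable section

/-!
Young's maximal inequality drives the proof: in a partition of `[s, t]` into `n + 1` intervals
some `[p i, p (i + 2)]` has `ω`-mass at most `2 ω(s,t) / n`, and removing `p (i + 1)` changes the
Riemann sum by at most `C (2 ω(s,t) / n) ^ θ`; iterating, every Riemann sum of `Ξ` over `[s, t]` is
within `K ω(s,t) ^ θ` of `Ξ s t`, where `K = C 2 ^ θ ζ(θ)`. Applied interval by interval to a common
refinement, the Riemann sums along two partitions differ by at most `K` times the sum of their
`ω ^ θ`-sums, and `∑ ω(u,v) ^ θ ≤ (max ω(u,v)) ^ (θ - 1) ω(s,t)` tends to `0` with the mesh by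
uniform continuity of `ω`. So Riemann sums converge, and the limit is additive and `K ω ^ θ`-close
to `Ξ`. An additive `J` close to `Ξ` is itself the limit, since its Riemann sums equal `J s t`.
-/

namespace IntervalPartition

variable {s t u : ℝ}

theorem le_pts (π : IntervalPartition s t) (i : ℕ) : s ≤ π.pts i :=
  π.first.symm.trans_le (π.mono (Nat.zero_le i))

theorem pts_le (π : IntervalPartition s t) {i : ℕ} (hi : i ≤ π.n) : π.pts i ≤ t :=
  (π.mono hi).trans_eq π.last

theorem left_le_right (π : IntervalPartition s t) : s ≤ t :=
  (π.le_pts π.n).trans_eq π.last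

theorem le_mesh (π : IntervalPartition s t) {i : ℕ} (hi : i < π.n) :
    π.pts (i + 1) - π.pts i ≤ π.mesh :=
  le_ciSup (Set.finite_range fun j : Fin π.n => π.pts (j.1 + 1) - π.pts j.1).bddAbove ⟨i, hi⟩

theorem riemannSum_sub {V : Type*} [AddCommGroup V] (π : IntervalPartition s t)
    (f g : ℝ → ℝ → V) :
    riemannSum π (fun u v => f u v - g u v) = riemannSum π f - riemannSum π g :=
  Finset.sum_sub_distrib _ _

theorem riemannSum_eq_of_additive {V : Type*} [AddCommGroup V] (π : IntervalPartition s t)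
    {f : ℝ → ℝ → V} (hf : ∀ a b c, s ≤ a → a ≤ b → b ≤ c → c ≤ t → f a c = f a b + f b c) :
    riemannSum π f = f s t := by
  have partial_sum :
      ∀ k ≤ π.n, ∑ i ∈ Finset.range k, f (π.pts i) (π.pts (i + 1)) = f s (π.pts k) := by
    intro k hk
    induction k with
    | zero =>
      have := hf s s s le_rfl le_rfl le_rfl π.left_le_right
      rw [Finset.sum_range_zero, π.first]
      exact (left_eq_add.1 this).symm
    | succ k ih =>
      rw [Finset.sum_range_succ, ih (by omega),
        hf s (π.pts k) (π.pts (k + 1)) le_rfl (π.le_pts k) (π.mono k.le_succ) (π.pts_le hk)]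
  rw [riemannSum, partial_sum π.n le_rfl, π.last]

def single (h : s ≤ t) : IntervalPartition s t where
  n := 1
  pts i := if i = 0 then s else t
  mono a b hab := by
    dsimp only
    split_ifs <;> first | rfl | exact h | omega
  first := rfl
  last := rfl

@[simp]
theorem riemannSum_single {V : Type*} [AddCommMonoid V] (h : s ≤ t) (f : ℝ → ℝ → V) :
    riemannSum (single h) f = f s t := by
  simp [riemannSum, single]

def uniform (h : s ≤ t) (m : ℕ) : IntervalPartition s t where
  n := m + 1
  pts i := s + (min i (m + 1) : ℕ) * ((t - s) / (m + 1))
  mono a b hab := by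
    have : 0 ≤ (t - s) / (m + 1) := div_nonneg (sub_nonneg.2 h) (by positivity)
    dsimp only
    gcongr
  first := by simp
  last := by
    rw [min_self]
    push_cast
    field_simp
    ring

theorem mesh_uniform (h : s ≤ t) (m : ℕ) : (uniform h m).mesh = (t - s) / (m + 1) := by
  have step : ∀ i : Fin (m + 1),
      (uniform h m).pts (i.1 + 1) - (uniform h m).pts i.1 = (t - s) / (m + 1) := by
    rintro ⟨i, hi⟩
    simp only [uniform, min_eq_left hi.le, min_eq_left (Nat.succ_le_of_lt hi)]
    push_cast
    ring
  exact (congrArg iSup (funext step)).trans ciSup_const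

theorem tendsto_mesh_uniform (h : s ≤ t) :
    Tendsto (fun m => (uniform h m).mesh) atTop (𝓝 0) := by
  simp only [mesh_uniform]
  exact (tendsto_const_div_atTop_nhds_zero_nat (t - s)).comp (tendsto_add_atTop_nat 1)
    |>.congr fun m => by simp

def append (π : IntervalPartition s u) (π' : IntervalPartition u t) : IntervalPartition s t where
  n := π.n + π'.n
  pts i := if i ≤ π.n then π.pts i else π'.pts (i - π.n)
  mono a b hab := by
    dsimp only
    split_ifs with ha hb hb
    · exact π.mono hab
    · calc π.pts a ≤ π.pts π.n := π.mono ha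
        _ = π'.pts 0 := π.last.trans π'.first.symm
        _ ≤ π'.pts (b - π.n) := π'.mono (Nat.zero_le _)
    · omega
    · exact π'.mono (by omega)
  first := by simp [π.first]
  last := by
    split_ifs with h
    · have h0 : π'.n = 0 := by omega
      have := π'.last
      rw [h0, π'.first] at this
      rw [h0, add_zero, π.last, this]
    · rw [Nat.add_sub_cancel_left, π'.last]

theorem riemannSum_append {V : Type*} [AddCommMonoid V] (π : IntervalPartition s u)
    (π' : IntervalPartition u t) (f : ℝ → ℝ → V) :
    riemannSum (π.append π') f = riemannSum π f + riemannSum π' f := by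
  simp only [riemannSum, append, Finset.sum_range_add]
  congr 1
  · refine Finset.sum_congr rfl fun i hi => ?_
    have := Finset.mem_range.1 hi
    rw [if_pos this.le, if_pos this.nat_succ_le]
  · refine Finset.sum_congr rfl fun i _ => ?_
    rcases i with _ | i
    · simp [π.last, π'.first]
    · rw [if_neg (by omega), if_neg (by omega), Nat.add_sub_cancel_left,
        show π.n + (i + 1) + 1 - π.n = i + 1 + 1 by omega]

def slice (π : IntervalPartition s t) (a b : ℕ) (hab : a ≤ b) :
    IntervalPartition (π.pts a) (π.pts b) where
  n := b - a
  pts r := π.pts (a + r)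
  mono _ _ h := π.mono (Nat.add_le_add_left h a)
  first := rfl
  last := by rw [Nat.add_sub_cancel' hab]

theorem riemannSum_slice {V : Type*} [AddCommMonoid V] (π : IntervalPartition s t) {a b : ℕ}
    (hab : a ≤ b) (f : ℝ → ℝ → V) :
    riemannSum (π.slice a b hab) f = ∑ k ∈ Finset.Ico a b, f (π.pts k) (π.pts (k + 1)) := by
  rw [Finset.sum_Ico_eq_sum_range]
  rfl

/-- `π` with its `(i + 1)`-st point removed. -/
def erase (π : IntervalPartition s t) (i : ℕ) (hi : i + 2 ≤ π.n) : IntervalPartition s t where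
  n := π.n - 1
  pts k := if k ≤ i then π.pts k else π.pts (k + 1)
  mono a b hab := by
    dsimp only
    split_ifs <;> exact π.mono (by omega)
  first := by simp [π.first]
  last := by rw [if_neg (by omega), Nat.sub_add_cancel (by omega), π.last]

theorem riemannSum_erase {V : Type*} [AddCommGroup V] (π : IntervalPartition s t) {i : ℕ}
    (hi : i + 2 ≤ π.n) (f : ℝ → ℝ → V) :
    riemannSum π f = riemannSum (π.erase i hi) f +
      (f (π.pts i) (π.pts (i + 1)) + f (π.pts (i + 1)) (π.pts (i + 2))
        - f (π.pts i) (π.pts (i + 2))) := by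
  obtain ⟨r, hr⟩ : ∃ r, π.n = i + 2 + r := ⟨π.n - (i + 2), by omega⟩
  have hr' : (π.erase i hi).n = i + 1 + r := by simp only [erase]; omega
  simp only [riemannSum, hr, hr', Finset.sum_range_add, Finset.sum_range_succ]
  have low : ∀ k ∈ Finset.range i, f ((π.erase i hi).pts k) ((π.erase i hi).pts (k + 1))
      = f (π.pts k) (π.pts (k + 1)) := fun k hk => by
    have := Finset.mem_range.1 hk
    simp only [erase, if_pos this.le, if_pos this.nat_succ_le]
  have high : ∀ k ∈ Finset.range r,
      f ((π.erase i hi).pts (i + 1 + k)) ((π.erase i hi).pts (i + 1 + k + 1))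
      = f (π.pts (i + 2 + k)) (π.pts (i + 2 + k + 1)) := fun k _ => by
    simp only [erase, if_neg (show ¬ i + 1 + k ≤ i by omega),
      if_neg (show ¬ i + 1 + k + 1 ≤ i by omega)]
    ring_nf
  rw [Finset.sum_congr rfl low, Finset.sum_congr rfl high]
  simp only [erase, le_refl, if_true, if_neg (show ¬ i + 1 ≤ i by omega)]
  abel

def Refines (q π : IntervalPartition s t) : Prop :=
  ∃ j : ℕ → ℕ, Monotone j ∧ j 0 = 0 ∧ j π.n = q.n ∧ ∀ i ≤ π.n, q.pts (j i) = π.pts i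

theorem sum_range_sum_Ico {M : Type*} [AddCommMonoid M] (g : ℕ → M) {j : ℕ → ℕ}
    (hj : Monotone j) (n : ℕ) :
    ∑ i ∈ Finset.range n, ∑ k ∈ Finset.Ico (j i) (j (i + 1)), g k
      = ∑ k ∈ Finset.Ico (j 0) (j n), g k := by
  induction n with
  | zero => simp
  | succ n ih =>
    rw [Finset.sum_range_succ, ih, Finset.sum_Ico_consecutive _ (hj n.zero_le) (hj n.le_succ)]

theorem riemannSum_eq_sum_sum_Ico {V : Type*} [AddCommMonoid V] (q : IntervalPartition s t)
    {π : IntervalPartition s t} {j : ℕ → ℕ} (hj : Monotone j) (hj0 : j 0 = 0)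
    (hjn : j π.n = q.n) (f : ℝ → ℝ → V) :
    riemannSum q f = ∑ i ∈ Finset.range π.n,
      ∑ k ∈ Finset.Ico (j i) (j (i + 1)), f (q.pts k) (q.pts (k + 1)) := by
  rw [sum_range_sum_Ico _ hj, hj0, hjn, ← Finset.range_eq_Ico]
  rfl

def ofFinset (Q : Finset ℝ) (hs : s ∈ Q) (ht : t ∈ Q) (hQ : ∀ x ∈ Q, s ≤ x ∧ x ≤ t) :
    IntervalPartition s t where
  n := Q.card - 1
  pts k := Q.orderEmbOfFin rfl ⟨min k (Q.card - 1), by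
    have := Q.card_pos.2 ⟨s, hs⟩; omega⟩
  mono _ _ h := (Q.orderEmbOfFin rfl).monotone (Fin.mk_le_mk.2 (min_le_min_right _ h))
  first := by
    simp only [Nat.zero_min]
    rw [Finset.orderEmbOfFin_zero _ (Q.card_pos.2 ⟨s, hs⟩)]
    exact le_antisymm (Finset.min'_le _ _ hs) (Finset.le_min' _ _ _ fun x hx => (hQ x hx).1)
  last := by
    simp only [min_self]
    rw [Finset.orderEmbOfFin_last _ (Q.card_pos.2 ⟨s, hs⟩)]
    exact le_antisymm (Finset.max'_le _ _ _ fun x hx => (hQ x hx).2) (Finset.le_max' _ _ ht)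

theorem refines_ofFinset (Q : Finset ℝ) (hs : s ∈ Q) (ht : t ∈ Q)
    (hQ : ∀ x ∈ Q, s ≤ x ∧ x ≤ t) (π : IntervalPartition s t) (hπ : ∀ i ≤ π.n, π.pts i ∈ Q) :
    (ofFinset Q hs ht hQ).Refines π := by
  set q := ofFinset Q hs ht hQ
  set e := Q.orderIsoOfFin rfl
  have pts_symm : ∀ x (hx : x ∈ Q), q.pts (e.symm ⟨x, hx⟩) = x := fun x hx => by
    have hlt := (e.symm ⟨x, hx⟩).2
    simp only [q, ofFinset, min_eq_left (Nat.le_sub_one_of_lt hlt), Fin.eta,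
      ← Finset.coe_orderIsoOfFin_apply, e, OrderIso.apply_symm_apply]
  have pts_inj : ∀ a b, a ≤ Q.card - 1 → b ≤ Q.card - 1 → q.pts a = q.pts b → a = b :=
    fun a b ha hb h => by
      simpa [min_eq_left ha, min_eq_left hb] using (Q.orderEmbOfFin rfl).injective h
  let j : ℕ → ℕ := fun i => e.symm ⟨π.pts (min i π.n), hπ _ (min_le_right _ _)⟩
  have hj : ∀ i ≤ π.n, q.pts (j i) = π.pts i := fun i hi => by
    simp only [j, pts_symm, min_eq_left hi]
  have hjn : ∀ i, j i ≤ q.n := fun i => Nat.le_sub_one_of_lt (e.symm _).2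
  refine ⟨j, fun a b hab => e.symm.monotone (π.mono (min_le_min_right _ hab)), ?_, ?_, hj⟩
  · exact pts_inj _ _ (hjn 0) (Nat.zero_le _)
      ((hj 0 (Nat.zero_le _)).trans (π.first.trans q.first.symm))
  · exact pts_inj _ _ (hjn _) le_rfl ((hj _ le_rfl).trans (π.last.trans q.last.symm))

theorem exists_refines_refines (π π' : IntervalPartition s t) :
    ∃ q : IntervalPartition s t, q.Refines π ∧ q.Refines π' := by
  classical
  let pts (π : IntervalPartition s t) := (Finset.range (π.n + 1)).image π.pts
  have mem_pts (π : IntervalPartition s t) {i} (hi : i ≤ π.n) : π.pts i ∈ pts π :=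
    Finset.mem_image_of_mem _ (Finset.mem_range.2 (Nat.lt_succ_of_le hi))
  have bounds (π : IntervalPartition s t) : ∀ x ∈ pts π, s ≤ x ∧ x ≤ t := by
    simp only [pts, Finset.mem_image, Finset.mem_range, forall_exists_index, and_imp]
    rintro _ i hi rfl
    exact ⟨π.le_pts i, π.pts_le (Nat.le_of_lt_succ hi)⟩
  have hs : s ∈ pts π ∪ pts π' := by
    simpa only [π.first] using Finset.mem_union_left _ (mem_pts π (Nat.zero_le π.n))
  have ht : t ∈ pts π ∪ pts π' := by
    simpa only [π.last] using Finset.mem_union_left _ (mem_pts π le_rfl)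
  have hQ : ∀ x ∈ pts π ∪ pts π', s ≤ x ∧ x ≤ t := fun x hx =>
    (Finset.mem_union.1 hx).elim (bounds π x) (bounds π' x)
  exact ⟨ofFinset _ hs ht hQ,
    refines_ofFinset _ hs ht hQ π fun i hi => Finset.mem_union_left _ (mem_pts π hi),
    refines_ofFinset _ hs ht hQ π' fun i hi => Finset.mem_union_right _ (mem_pts π' hi)⟩

end IntervalPartition

namespace IsControl

variable {T θ : ℝ} {ω : ℝ → ℝ → ℝ} (hω : IsControl T ω)
include hω

theorem nonneg {s t : ℝ} (hs : 0 ≤ s) (hst : s ≤ t) (ht : t ≤ T) : 0 ≤ ω s t :=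
  hω.2.2.2 s t hs hst ht

theorem mono {a a' b b' : ℝ} (ha' : 0 ≤ a') (ha : a' ≤ a) (hab : a ≤ b) (hb : b ≤ b')
    (hb' : b' ≤ T) : ω a b ≤ ω a' b' := by
  have := hω.2.2.1 a' a b' ha' ha (hab.trans hb) hb'
  have := hω.2.2.1 a b b' (ha'.trans ha) hab hb hb'
  have := hω.nonneg ha' ha ((hab.trans hb).trans hb')
  have := hω.nonneg ((ha'.trans ha).trans hab) hb hb'
  linarith

theorem sum_le {p : ℕ → ℝ} (hp : Monotone p) (h0 : 0 ≤ p 0) {n : ℕ} (hn : p n ≤ T) :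
    ∑ i ∈ Finset.range n, ω (p i) (p (i + 1)) ≤ ω (p 0) (p n) := by
  induction n with
  | zero => simp [hω.2.1 _ h0 hn]
  | succ n ih =>
    rw [Finset.sum_range_succ]
    linarith [ih ((hp n.le_succ).trans hn),
      hω.2.2.1 _ _ _ h0 (hp n.zero_le) (hp n.le_succ) hn]

/-- The intervals `[p i, p (i + 2)]` with `i` even are disjoint, and so are those with `i` odd. -/
theorem sum_skip_le {p : ℕ → ℝ} (hp : Monotone p) (h0 : 0 ≤ p 0) {n : ℕ} (hn : p (n + 1) ≤ T) :
    ∑ i ∈ Finset.range n, ω (p i) (p (i + 2)) ≤ ω (p 0) (p n) + ω (p 0) (p (n + 1)) := by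
  induction n with
  | zero =>
    simpa using add_nonneg (hω.nonneg h0 le_rfl ((hp (Nat.zero_le 1)).trans hn))
      (hω.nonneg h0 (hp (Nat.zero_le 1)) hn)
  | succ n ih =>
    rw [Finset.sum_range_succ]
    linarith [ih ((hp n.succ.le_succ).trans hn),
      hω.2.2.1 _ _ _ h0 (hp n.zero_le) (hp (by omega : n ≤ n + 2)) hn]

theorem exists_le_div {p : ℕ → ℝ} (hp : Monotone p) (h0 : 0 ≤ p 0) {n : ℕ} (hn : 0 < n)
    (hT : p (n + 1) ≤ T) : ∃ i < n, ω (p i) (p (i + 2)) ≤ 2 * ω (p 0) (p (n + 1)) / n := by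
  have hsum : ∑ i ∈ Finset.range n, ω (p i) (p (i + 2))
      ≤ ∑ _i ∈ Finset.range n, 2 * ω (p 0) (p (n + 1)) / n := by
    rw [Finset.sum_const, Finset.card_range, nsmul_eq_mul, mul_div_cancel₀ _ (by positivity)]
    linarith [hω.sum_skip_le hp h0 hT, hω.mono h0 le_rfl (hp n.zero_le) (hp n.le_succ) hT]
  simpa using Finset.exists_le_of_sum_le (Finset.nonempty_range_iff.2 hn.ne') hsum

theorem exists_forall_lt {ε : ℝ} (hε : 0 < ε) :
    ∃ δ > 0, ∀ u v, 0 ≤ u → u ≤ v → v ≤ T → v - u < δ → ω u v < ε := by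
  set K := {q : ℝ × ℝ | 0 ≤ q.1 ∧ q.1 ≤ q.2 ∧ q.2 ≤ T}
  have hK : IsCompact K := by
    refine (isCompact_Icc.prod isCompact_Icc : IsCompact (Icc (0 : ℝ) T ×ˢ Icc (0 : ℝ) T))
      |>.of_isClosed_subset ((isClosed_le continuous_const continuous_fst).inter
        ((isClosed_le continuous_fst continuous_snd).inter
          (isClosed_le continuous_snd continuous_const))) ?_
    rintro ⟨u, v⟩ ⟨hu, huv, hv⟩
    exact ⟨⟨hu, huv.trans hv⟩, hu.trans huv, hv⟩
  obtain ⟨δ, hδ, hω'⟩ :=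
    Metric.uniformContinuousOn_iff.1 (hK.uniformContinuousOn_of_continuous hω.1) ε hε
  refine ⟨δ, hδ, fun u v hu huv hv hlt => ?_⟩
  have hdist : dist (u, v) (u, u) < δ := by
    rwa [Prod.dist_eq, dist_self, Real.dist_eq, abs_of_nonneg (sub_nonneg.2 huv),
      max_eq_right (sub_nonneg.2 huv)]
  have := hω' (u, v) ⟨hu, huv, hv⟩ (u, u) ⟨hu, le_rfl, huv.trans hv⟩ hdist
  rw [hω.2.1 u hu (huv.trans hv), Real.dist_eq, sub_zero] at this
  exact (le_abs_self _).trans_lt this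

variable {s t : ℝ}

theorem riemannSum_rpow_nonneg (π : IntervalPartition s t) (hs : 0 ≤ s) (ht : t ≤ T) :
    0 ≤ riemannSum π fun u v => ω u v ^ θ :=
  Finset.sum_nonneg fun i hi => Real.rpow_nonneg (hω.nonneg (hs.trans (π.le_pts i))
    (π.mono i.le_succ) ((π.pts_le (Finset.mem_range.1 hi)).trans ht)) _

theorem riemannSum_rpow_le (hθ : 1 ≤ θ) (π : IntervalPartition s t) (hs : 0 ≤ s) (ht : t ≤ T)
    {η : ℝ} (hη : 0 ≤ η) (h : ∀ i < π.n, ω (π.pts i) (π.pts (i + 1)) ≤ η) :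
    (riemannSum π fun u v => ω u v ^ θ) ≤ η ^ (θ - 1) * ω s t := by
  have step : ∀ i < π.n, ω (π.pts i) (π.pts (i + 1)) ^ θ
      ≤ η ^ (θ - 1) * ω (π.pts i) (π.pts (i + 1)) := fun i hi => by
    have h0 := hω.nonneg (hs.trans (π.le_pts i)) (π.mono i.le_succ) ((π.pts_le hi).trans ht)
    calc ω (π.pts i) (π.pts (i + 1)) ^ θ
        = ω (π.pts i) (π.pts (i + 1)) ^ (θ - 1) * ω (π.pts i) (π.pts (i + 1)) := by
          rw [← Real.rpow_add_one' h0 (by linarith), sub_add_cancel]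
      _ ≤ η ^ (θ - 1) * ω (π.pts i) (π.pts (i + 1)) := by
          gcongr
          exact h i hi
  calc (riemannSum π fun u v => ω u v ^ θ)
      ≤ ∑ i ∈ Finset.range π.n, η ^ (θ - 1) * ω (π.pts i) (π.pts (i + 1)) :=
        Finset.sum_le_sum fun i hi => step i (Finset.mem_range.1 hi)
    _ ≤ η ^ (θ - 1) * ω s t := by
        have := hω.sum_le π.mono (hs.trans (π.le_pts 0)) ((π.pts_le le_rfl).trans ht)
        rw [π.first, π.last] at this
        rw [← Finset.mul_sum]
        exact mul_le_mul_of_nonneg_left this (Real.rpow_nonneg hη _)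

theorem tendsto_riemannSum_rpow (hθ : 1 < θ) (π : ℕ → IntervalPartition s t) (hs : 0 ≤ s)
    (ht : t ≤ T) (hmesh : Tendsto (fun k => (π k).mesh) atTop (𝓝 0)) :
    Tendsto (fun k => riemannSum (π k) fun u v => ω u v ^ θ) atTop (𝓝 0) := by
  refine tendsto_order.2 ⟨fun a ha => Eventually.of_forall fun k =>
    ha.trans_le (hω.riemannSum_rpow_nonneg (π k) hs ht), fun ε hε => ?_⟩
  have hpow : Tendsto (fun η : ℝ => η ^ (θ - 1) * ω s t) (𝓝[>] 0) (𝓝 0) := by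
    have := ((Real.continuousAt_rpow_const 0 (θ - 1) (Or.inr (by linarith))).tendsto.mul_const
      (ω s t))
    rw [Real.zero_rpow (by linarith), zero_mul] at this
    exact this.mono_left nhdsWithin_le_nhds
  obtain ⟨η, hηε, hη⟩ := ((hpow.eventually (gt_mem_nhds hε)).and self_mem_nhdsWithin).exists
  obtain ⟨δ, hδ, hωδ⟩ := hω.exists_forall_lt (show (0 : ℝ) < η from hη)
  filter_upwards [hmesh.eventually (gt_mem_nhds hδ)] with k hk
  refine (hω.riemannSum_rpow_le hθ.le (π k) hs ht (le_of_lt hη) fun i hi => ?_).trans_lt hηε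
  exact (hωδ _ _ (hs.trans ((π k).le_pts i)) ((π k).mono i.le_succ)
    (((π k).pts_le hi).trans ht) (((π k).le_mesh hi).trans_lt hk)).le

end IsControl

theorem cauchySeq_of_dist_le_add {X : Type*} [PseudoMetricSpace X] {x : ℕ → X} {a : ℕ → ℝ}
    (ha : Tendsto a atTop (𝓝 0)) (h : ∀ m n, dist (x m) (x n) ≤ a m + a n) : CauchySeq x := by
  refine Metric.cauchySeq_iff'.2 fun ε hε => ?_
  obtain ⟨N, hN⟩ := eventually_atTop.1 (ha.eventually (gt_mem_nhds (half_pos hε)))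
  exact ⟨N, fun n hn => (h n N).trans_lt (by linarith [hN n hn, hN N le_rfl])⟩

section Sewing

variable {V : Type*} [NormedAddCommGroup V] {T C θ : ℝ} {ω : ℝ → ℝ → ℝ} {Ξ : ℝ → ℝ → V}
  {s t : ℝ}

def sewingConstant (C θ : ℝ) : ℝ := C * 2 ^ θ * ∑' k : ℕ, ((k : ℝ) + 1) ^ (-θ)

def sew (Ξ : ℝ → ℝ → V) (s t : ℝ) : V :=
  if h : s ≤ t then limUnder atTop fun m => riemannSum (IntervalPartition.uniform h m) Ξ else 0

theorem summable_nat_add_one_rpow_neg (hθ : 1 < θ) :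
    Summable fun k : ℕ => ((k : ℝ) + 1) ^ (-θ) := by
  have := (summable_nat_add_iff 1).2 (Real.summable_nat_rpow.2 (neg_lt_neg hθ))
  exact this.congr fun k => by push_cast; rfl

theorem almostAdditive_diag (hω : IsControl T ω) (hθ : 0 < θ)
    (hΞ : ∀ s u t : ℝ, 0 ≤ s → s ≤ u → u ≤ t → t ≤ T →
      ‖Ξ s t - Ξ s u - Ξ u t‖ ≤ C * ω s t ^ θ)
    {u : ℝ} (hu : 0 ≤ u) (huT : u ≤ T) : Ξ u u = 0 := by
  have := hΞ u u u hu le_rfl le_rfl huT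
  rw [hω.2.1 u hu huT, Real.zero_rpow hθ.ne', mul_zero, sub_self, zero_sub, norm_neg] at this
  exact norm_le_zero_iff.1 this

variable (hω : IsControl T ω) (hC : 0 ≤ C) (hθ : 1 < θ)
  (hΞ : ∀ s u t : ℝ, 0 ≤ s → s ≤ u → u ≤ t → t ≤ T →
    ‖Ξ s t - Ξ s u - Ξ u t‖ ≤ C * ω s t ^ θ)
include hω hC hθ hΞ

theorem norm_riemannSum_sub_le_of_n_eq_succ (n : ℕ) :
    ∀ π : IntervalPartition s t, π.n = n + 1 → 0 ≤ s → t ≤ T →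
      ‖riemannSum π Ξ - Ξ s t‖
        ≤ C * 2 ^ θ * (∑ k ∈ Finset.range n, ((k : ℝ) + 1) ^ (-θ)) * ω s t ^ θ := by
  induction n with
  | zero =>
    intro π hn _ _
    simp [riemannSum, hn, π.first, ← π.last]
  | succ n ih =>
    intro π hn hs ht
    set Ω := ω s t
    obtain ⟨i, hi, hsmall⟩ := hω.exists_le_div π.mono (hs.trans (π.le_pts 0)) n.succ_pos
      ((π.pts_le (by omega)).trans ht)
    rw [π.first, show n + 1 + 1 = π.n by omega, π.last] at hsmall
    have hi2 : i + 2 ≤ π.n := by omega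
    have hp0 : 0 ≤ π.pts i := hs.trans (π.le_pts i)
    have hp2 : π.pts (i + 2) ≤ T := (π.pts_le hi2).trans ht
    have hdefect : ‖Ξ (π.pts i) (π.pts (i + 1)) + Ξ (π.pts (i + 1)) (π.pts (i + 2))
        - Ξ (π.pts i) (π.pts (i + 2))‖ ≤ C * 2 ^ θ * ((n : ℝ) + 1) ^ (-θ) * Ω ^ θ := by
      have hω0 := hω.nonneg hp0 (π.mono (by omega : i ≤ i + 2)) hp2
      have hΩ0 : 0 ≤ Ω := hω.nonneg hs π.left_le_right ht
      calc _ = ‖Ξ (π.pts i) (π.pts (i + 2)) - Ξ (π.pts i) (π.pts (i + 1))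
              - Ξ (π.pts (i + 1)) (π.pts (i + 2))‖ := by
            rw [← norm_neg]; congr 1; abel
        _ ≤ C * ω (π.pts i) (π.pts (i + 2)) ^ θ :=
            hΞ _ _ _ hp0 (π.mono (by omega)) (π.mono (by omega)) hp2
        _ ≤ C * (2 * Ω / (n + 1 : ℕ)) ^ θ := by gcongr
        _ = C * 2 ^ θ * ((n : ℝ) + 1) ^ (-θ) * Ω ^ θ := by
            rw [Real.div_rpow (by positivity) (by positivity), Real.mul_rpow (by norm_num) hΩ0,
              Real.rpow_neg (by positivity)]
            push_cast
            ring
    have hih := ih (π.erase i hi2) (by simp only [IntervalPartition.erase]; omega) hs ht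
    rw [π.riemannSum_erase hi2, add_sub_right_comm, Finset.sum_range_succ]
    calc _ ≤ _ := norm_add_le _ _
      _ ≤ _ := add_le_add hih hdefect
      _ = _ := by ring

theorem norm_riemannSum_sub_le (π : IntervalPartition s t) (hs : 0 ≤ s) (ht : t ≤ T) :
    ‖riemannSum π Ξ - Ξ s t‖ ≤ sewingConstant C θ * ω s t ^ θ := by
  rcases hn : π.n with _ | n
  · have hst := π.last
    rw [hn, π.first] at hst
    subst hst
    simp [riemannSum, hn, almostAdditive_diag hω (by linarith) hΞ hs ht, hω.2.1 s hs ht,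
      Real.zero_rpow (by linarith : θ ≠ 0)]
  · refine (norm_riemannSum_sub_le_of_n_eq_succ hω hC hθ hΞ n π hn hs ht).trans ?_
    have hsum := (summable_nat_add_one_rpow_neg hθ).sum_le_tsum (Finset.range n)
      fun k _ => Real.rpow_nonneg (by positivity) _
    unfold sewingConstant
    gcongr
    exact Real.rpow_nonneg (hω.nonneg hs π.left_le_right ht) _

theorem IntervalPartition.Refines.norm_riemannSum_sub_le {q π : IntervalPartition s t}
    (h : q.Refines π) (hs : 0 ≤ s) (ht : t ≤ T) :
    ‖riemannSum q Ξ - riemannSum π Ξ‖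
      ≤ sewingConstant C θ * riemannSum π fun u v => ω u v ^ θ := by
  obtain ⟨j, hj, hj0, hjn, hqj⟩ := h
  have block : ∀ i < π.n,
      ‖∑ k ∈ Finset.Ico (j i) (j (i + 1)), Ξ (q.pts k) (q.pts (k + 1))
        - Ξ (π.pts i) (π.pts (i + 1))‖ ≤ sewingConstant C θ * ω (π.pts i) (π.pts (i + 1)) ^ θ := by
    intro i hi
    have := _root_.norm_riemannSum_sub_le hω hC hθ hΞ (q.slice _ _ (hj i.le_succ))
      (hs.trans (q.le_pts _)) ((q.pts_le ((hj hi).trans_eq hjn)).trans ht)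
    rwa [q.riemannSum_slice, hqj i hi.le, hqj (i + 1) hi] at this
  rw [q.riemannSum_eq_sum_sum_Ico hj hj0 hjn, riemannSum, riemannSum, ← Finset.sum_sub_distrib,
    Finset.mul_sum]
  exact (norm_sum_le _ _).trans (Finset.sum_le_sum fun i hi => block i (Finset.mem_range.1 hi))

theorem norm_riemannSum_sub_riemannSum_le (π π' : IntervalPartition s t) (hs : 0 ≤ s)
    (ht : t ≤ T) :
    ‖riemannSum π Ξ - riemannSum π' Ξ‖ ≤ sewingConstant C θ *
      ((riemannSum π fun u v => ω u v ^ θ) + riemannSum π' fun u v => ω u v ^ θ) := by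
  obtain ⟨q, hπ, hπ'⟩ := π.exists_refines_refines π'
  have h := hπ.norm_riemannSum_sub_le hω hC hθ hΞ hs ht
  have h' := hπ'.norm_riemannSum_sub_le hω hC hθ hΞ hs ht
  calc _ = ‖(riemannSum q Ξ - riemannSum π' Ξ) - (riemannSum q Ξ - riemannSum π Ξ)‖ := by
        congr 1; abel
    _ ≤ _ := norm_sub_le_of_le h' h
    _ = _ := by ring

theorem cauchySeq_riemannSum_uniform (hs : 0 ≤ s) (hst : s ≤ t) (ht : t ≤ T) :
    CauchySeq fun m => riemannSum (IntervalPartition.uniform hst m) Ξ := by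
  have hW := hω.tendsto_riemannSum_rpow hθ _ hs ht (IntervalPartition.tendsto_mesh_uniform hst)
  refine cauchySeq_of_dist_le_add (by simpa using hW.const_mul (sewingConstant C θ))
    fun m n => ?_
  rw [dist_eq_norm, ← mul_add]
  exact norm_riemannSum_sub_riemannSum_le hω hC hθ hΞ _ _ hs ht

variable [CompleteSpace V]

theorem tendsto_riemannSum_uniform_sew (hs : 0 ≤ s) (hst : s ≤ t) (ht : t ≤ T) :
    Tendsto (fun m => riemannSum (IntervalPartition.uniform hst m) Ξ) atTop (𝓝 (sew Ξ s t)) := by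
  rw [sew, dif_pos hst]
  exact (cauchySeq_riemannSum_uniform hω hC hθ hΞ hs hst ht).tendsto_limUnder

theorem norm_riemannSum_sub_sew_le (π : IntervalPartition s t) (hs : 0 ≤ s) (ht : t ≤ T) :
    ‖riemannSum π Ξ - sew Ξ s t‖ ≤ sewingConstant C θ * riemannSum π fun u v => ω u v ^ θ := by
  have hst := π.left_le_right
  have hW := ((hω.tendsto_riemannSum_rpow hθ _ hs ht
    (IntervalPartition.tendsto_mesh_uniform hst)).const_add
      (riemannSum π fun u v => ω u v ^ θ)).const_mul (sewingConstant C θ)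
  rw [add_zero] at hW
  exact le_of_tendsto_of_tendsto'
    ((tendsto_riemannSum_uniform_sew hω hC hθ hΞ hs hst ht).const_sub (riemannSum π Ξ)).norm hW
    fun m => norm_riemannSum_sub_riemannSum_le hω hC hθ hΞ π _ hs ht

theorem tendsto_riemannSum_sew {π : ℕ → IntervalPartition s t} (hs : 0 ≤ s) (ht : t ≤ T)
    (hπ : Tendsto (fun k => riemannSum (π k) fun u v => ω u v ^ θ) atTop (𝓝 0)) :
    Tendsto (fun k => riemannSum (π k) Ξ) atTop (𝓝 (sew Ξ s t)) :=
  tendsto_iff_norm_sub_tendsto_zero.2 <| squeeze_zero (fun _ => norm_nonneg _)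
    (fun k => norm_riemannSum_sub_sew_le hω hC hθ hΞ (π k) hs ht)
    (by simpa using hπ.const_mul (sewingConstant C θ))

theorem rSumLimit_sew (hs : 0 ≤ s) (ht : t ≤ T) : RSumLimit s t Ξ (sew Ξ s t) :=
  fun π hmesh => tendsto_riemannSum_sew hω hC hθ hΞ hs ht
    (hω.tendsto_riemannSum_rpow hθ π hs ht hmesh)

theorem norm_sew_sub_le (hs : 0 ≤ s) (hst : s ≤ t) (ht : t ≤ T) :
    ‖sew Ξ s t - Ξ s t‖ ≤ sewingConstant C θ * ω s t ^ θ := by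
  simpa [norm_sub_rev] using
    norm_riemannSum_sub_sew_le hω hC hθ hΞ (IntervalPartition.single hst) hs ht

theorem sew_add {u : ℝ} (hs : 0 ≤ s) (hsu : s ≤ u) (hut : u ≤ t) (ht : t ≤ T) :
    sew Ξ s t = sew Ξ s u + sew Ξ u t := by
  let π m := (IntervalPartition.uniform hsu m).append (IntervalPartition.uniform hut m)
  have hW (a b : ℝ) (ha : 0 ≤ a) (hab : a ≤ b) (hb : b ≤ T) :=
    hω.tendsto_riemannSum_rpow hθ _ ha hb (IntervalPartition.tendsto_mesh_uniform hab)
  have hlim := tendsto_riemannSum_sew hω hC hθ hΞ (π := π) hs ht (by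
    simpa only [π, IntervalPartition.riemannSum_append, add_zero] using
      (hW s u hs hsu (hut.trans ht)).add (hW u t (hs.trans hsu) hut ht))
  refine tendsto_nhds_unique hlim ?_
  simp only [π, IntervalPartition.riemannSum_append]
  exact (tendsto_riemannSum_uniform_sew hω hC hθ hΞ hs hsu (hut.trans ht)).add
    (tendsto_riemannSum_uniform_sew hω hC hθ hΞ (hs.trans hsu) hut ht)

end Sewing

theorem rSumLimit_of_additive {V : Type*} [NormedAddCommGroup V] {T θ C' : ℝ}
    {ω : ℝ → ℝ → ℝ} (hω : IsControl T ω) (hθ : 1 < θ) {Ξ J : ℝ → ℝ → V}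
    (hJ : ∀ s u t : ℝ, 0 ≤ s → s ≤ u → u ≤ t → t ≤ T → J s t = J s u + J u t)
    (hJΞ : ∀ s t : ℝ, 0 ≤ s → s ≤ t → t ≤ T → ‖J s t - Ξ s t‖ ≤ C' * ω s t ^ θ)
    {s t : ℝ} (hs : 0 ≤ s) (ht : t ≤ T) : RSumLimit s t Ξ (J s t) := by
  intro π hmesh
  have bound : ∀ k, ‖riemannSum (π k) Ξ - J s t‖
      ≤ C' * riemannSum (π k) fun u v => ω u v ^ θ := fun k => by
    rw [← (π k).riemannSum_eq_of_additive fun a b c ha hab hbc hc =>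
      hJ a b c (hs.trans ha) hab hbc (hc.trans ht), ← norm_neg, neg_sub,
      ← IntervalPartition.riemannSum_sub, riemannSum, riemannSum, Finset.mul_sum]
    refine (norm_sum_le _ _).trans (Finset.sum_le_sum fun i hi => hJΞ _ _ ?_ ?_ ?_)
    · exact hs.trans ((π k).le_pts i)
    · exact (π k).mono i.le_succ
    · exact ((π k).pts_le (Finset.mem_range.1 hi)).trans ht
  exact tendsto_iff_norm_sub_tendsto_zero.2 <| squeeze_zero (fun _ => norm_nonneg _) bound
    (by simpa using (hω.tendsto_riemannSum_rpow hθ π hs ht hmesh).const_mul C')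

theorem statement3_general (T : ℝ) (e : ℕ)
    (ω : ℝ → ℝ → ℝ) (hω : IsControl T ω)
    (Ξ : ℝ → ℝ → Fin e → ℝ) (C θ : ℝ) (hC : 0 ≤ C) (hθ : 1 < θ)
    (hΞ : ∀ s u t : ℝ, 0 ≤ s → s ≤ u → u ≤ t → t ≤ T →
      ‖Ξ s t - Ξ s u - Ξ u t‖ ≤ C * ω s t ^ θ) :
    ∃ I : ℝ → ℝ → Fin e → ℝ,
      ((∀ s u t : ℝ, 0 ≤ s → s ≤ u → u ≤ t → t ≤ T → I s t = I s u + I u t) ∧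
        ∃ C' : ℝ, ∀ s t : ℝ, 0 ≤ s → s ≤ t → t ≤ T →
          ‖I s t - Ξ s t‖ ≤ C' * ω s t ^ θ) ∧
      (∀ J : ℝ → ℝ → Fin e → ℝ,
        ((∀ s u t : ℝ, 0 ≤ s → s ≤ u → u ≤ t → t ≤ T → J s t = J s u + J u t) ∧
          ∃ C'' : ℝ, ∀ s t : ℝ, 0 ≤ s → s ≤ t → t ≤ T →
            ‖J s t - Ξ s t‖ ≤ C'' * ω s t ^ θ) →
        ∀ s t : ℝ, 0 ≤ s → s ≤ t → t ≤ T → J s t = I s t) ∧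
      (∀ s t : ℝ, 0 ≤ s → s ≤ t → t ≤ T → RSumLimit s t Ξ (I s t)) := by
  refine ⟨sew Ξ, ⟨fun s u t hs hsu hut ht => sew_add hω hC hθ hΞ hs hsu hut ht,
    sewingConstant C θ, fun s t hs hst ht => norm_sew_sub_le hω hC hθ hΞ hs hst ht⟩, ?_,
    fun s t hs _ ht => rSumLimit_sew hω hC hθ hΞ hs ht⟩
  rintro J ⟨hJ, C'', hJΞ⟩ s t hs hst ht
  have hmesh := IntervalPartition.tendsto_mesh_uniform hst
  exact tendsto_nhds_unique (rSumLimit_of_additive hω hθ hJ hJΞ hs ht _ hmesh)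
    (rSumLimit_sew hω hC hθ hΞ hs ht _ hmesh)

/-- The sewing lemma: an almost-additive two-parameter function admits a
unique additive function at `O(ω^θ)`-distance, obtained as a limit of Riemann sums. -/
theorem statement3 (T : ℝ) (hT : 0 ≤ T) (e : ℕ)
    (ω : ℝ → ℝ → ℝ) (hω : IsControl T ω)
    (Ξ : ℝ → ℝ → Fin e → ℝ) (C θ : ℝ) (hC : 0 ≤ C) (hθ : 1 < θ)
    (hΞ : ∀ s u t : ℝ, 0 ≤ s → s ≤ u → u ≤ t → t ≤ T →
      ‖Ξ s t - Ξ s u - Ξ u t‖ ≤ C * ω s t ^ θ) :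
    ∃ I : ℝ → ℝ → Fin e → ℝ,
      ((∀ s u t : ℝ, 0 ≤ s → s ≤ u → u ≤ t → t ≤ T → I s t = I s u + I u t) ∧
        ∃ C' : ℝ, ∀ s t : ℝ, 0 ≤ s → s ≤ t → t ≤ T →
          ‖I s t - Ξ s t‖ ≤ C' * ω s t ^ θ) ∧
      (∀ J : ℝ → ℝ → Fin e → ℝ,
        ((∀ s u t : ℝ, 0 ≤ s → s ≤ u → u ≤ t → t ≤ T → J s t = J s u + J u t) ∧
          ∃ C'' : ℝ, ∀ s t : ℝ, 0 ≤ s → s ≤ t → t ≤ T →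
            ‖J s t - Ξ s t‖ ≤ C'' * ω s t ^ θ) →
        ∀ s t : ℝ, 0 ≤ s → s ≤ t → t ≤ T → J s t = I s t) ∧
      (∀ s t : ℝ, 0 ≤ s → s ≤ t → t ≤ T → RSumLimit s t Ξ (I s t)) :=
  statement3_general T e ω hω Ξ C θ hC hθ hΞ
end
end
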